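/- arXiv:2409.06112 — 2 statements merged into one kernel-verified Lean document; each statement's English description precedes it below -/
import Mathlib

section
/- For an incentive-compatible mechanism (q,t) (equivalently, ν = v∘q nondecreasing with U(θ) = U(θ̲) + ∫_{θ̲}^θ ν(s) ds), the no-lump-sum-transfer condition t(θ) ≥ 0 for all θ ∈ [θ̲,θ̄] holds if and only if U(θ̲) ≤ θ̲ · ν(θ̲). -/
open MeasureTheory Set

/-! The envelope formula and monotonicity of `ν` give `∫_{θ̲}^θ ν ≤ (θ - θ̲) ν(θ)`, hence
`t(θ) = θ ν(θ) - U(θ) ≥ θ̲ ν(θ) - U(θ̲) ≥ θ̲ ν(θ̲) - U(θ̲) = t(θ̲)`. So payments are smallest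
at the lowest type, and nonnegativity of all of them reduces to `t(θ̲) ≥ 0`. -/

theorem MonotoneOn.intervalIntegral_le_sub_mul {f : ℝ → ℝ} {a b : ℝ} (hab : a ≤ b)
    (hf : MonotoneOn f (Icc a b)) : ∫ s in a..b, f s ≤ (b - a) * f b := by
  have hint : IntervalIntegrable f volume a b :=
    MonotoneOn.intervalIntegrable (by rwa [uIcc_of_le hab])
  calc ∫ s in a..b, f s
      ≤ ∫ _ in a..b, f b := intervalIntegral.integral_mono_on hab hint
        intervalIntegrable_const fun s hs => hf hs (right_mem_Icc.mpr hab) hs.2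
    _ = (b - a) * f b := by rw [intervalIntegral.integral_const, smul_eq_mul]

theorem payment_lowest_le_of_envelope {ν t : ℝ → ℝ} {a b : ℝ} (ha : 0 ≤ a)
    (hmono : MonotoneOn ν (Icc a b))
    (henv : ∀ θ ∈ Icc a b, θ * ν θ - t θ = (a * ν a - t a) + ∫ s in a..θ, ν s) :
    ∀ θ ∈ Icc a b, t a ≤ t θ := by
  intro θ hθ
  have hint : ∫ s in a..θ, ν s ≤ (θ - a) * ν θ :=
    (hmono.mono (Icc_subset_Icc le_rfl hθ.2)).intervalIntegral_le_sub_mul hθ.1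
  have hν : a * ν a ≤ a * ν θ :=
    mul_le_mul_of_nonneg_left (hmono (left_mem_Icc.mpr (hθ.1.trans hθ.2)) hθ hθ.1) ha
  linarith [henv θ hθ]

theorem stmt_1_general
    (θl θh : ℝ) (hθl : 0 < θl) (hlh : θl ≤ θh)
    (v : ℝ → ℝ)
    (q : ℝ → ℝ)
    (t : ℝ → ℝ)
    (hmono : MonotoneOn (fun θ => v (q θ)) (Icc θl θh))
    (henv : ∀ θ ∈ Icc θl θh,
      θ * v (q θ) - t θ = (θl * v (q θl) - t θl) + ∫ s in θl..θ, v (q s)) :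
    (∀ θ ∈ Icc θl θh, 0 ≤ t θ) ↔
      θl * v (q θl) - t θl ≤ θl * v (q θl) := by
  have hmin := payment_lowest_le_of_envelope hθl.le hmono henv
  constructor
  · intro h
    linarith [h θl (left_mem_Icc.mpr hlh)]
  · intro h θ hθ
    linarith [hmin θ hθ]

/-- For an incentive-compatible mechanism (characterized by a nondecreasing
subutility ν = v ∘ q and the envelope formula), payments are nonnegative
everywhere iff U(θ̲) ≤ θ̲ · ν(θ̲). -/
theorem stmt_1
    (θl θh A : ℝ) (hθl : 0 < θl) (hlh : θl ≤ θh)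
    (v : ℝ → ℝ) (hv : StrictMonoOn v (Icc 0 A)) (hvc : ContinuousOn v (Icc 0 A))
    (q : ℝ → ℝ) (hq : ∀ θ ∈ Icc θl θh, q θ ∈ Icc 0 A)
    (t : ℝ → ℝ)
    (hmono : MonotoneOn (fun θ => v (q θ)) (Icc θl θh))
    (henv : ∀ θ ∈ Icc θl θh,
      θ * v (q θ) - t θ = (θl * v (q θl) - t θl) + ∫ s in θl..θ, v (q s)) :
    (∀ θ ∈ Icc θl θh, 0 ≤ t θ) ↔
      θl * v (q θl) - t θl ≤ θl * v (q θl) :=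
  stmt_1_general θl θh hθl hlh v q t hmono henv
end

section
/- Let ω be continuous and nondecreasing, F with positive density, and α > 0 with E_F[ω] ≤ α. Define J₀(θ) = θ − (∫_{θ}^{θ̄} (α − ω(s)) dF(s)) / (α f(θ)) on [θ_L*, θ̄], where θ_L* = min{θ : ∫_θ^{θ̄} (α − ω) dF ≤ 0}. Then J₀(θ) ≥ θ for all θ ∈ [θ_L*, θ̄], with J₀(θ_L*) = θ_L* and J₀(θ̄) = θ̄. -/
open MeasureTheory Set

/-- Under positive correlation, the un-ironed virtual type
J₀(θ) = θ − (∫_θ^{θ̄}(α−ω)dF)/(α f(θ)) weakly exceeds θ on [θ_L*, θ̄] and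
coincides with θ at both endpoints. -/
theorem stmt_15
    (θl θh α θL : ℝ) (hlh : θl < θh) (hα : 0 < α)
    (ω : ℝ → ℝ) (hωc : ContinuousOn ω (Icc θl θh)) (hωm : MonotoneOn ω (Icc θl θh))
    (f : ℝ → ℝ) (hfc : ContinuousOn f (Icc θl θh)) (hfpos : ∀ s ∈ Icc θl θh, 0 < f s)
    (hf1 : ∫ s in θl..θh, f s = 1)
    (hEω : (∫ s in θl..θh, ω s * f s) ≤ α)
    (hθL : IsLeast {θ ∈ Icc θl θh | (∫ s in θ..θh, (α - ω s) * f s) ≤ 0} θL) :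
    (∀ θ ∈ Icc θL θh,
        θ ≤ θ - (∫ s in θ..θh, (α - ω s) * f s) / (α * f θ)) ∧
      θL - (∫ s in θL..θh, (α - ω s) * f s) / (α * f θL) = θL ∧
      θh - (∫ s in θh..θh, (α - ω s) * f s) / (α * f θh) = θh := by
  obtain ⟨⟨hθLmem, hθLle⟩, hθLmin⟩ := hθL
  set g : ℝ → ℝ := fun s => (α - ω s) * f s with hg
  have hgc : ContinuousOn g (Icc θl θh) := (continuousOn_const.sub hωc).mul hfc
  have hgint : ∀ a b : ℝ, a ∈ Icc θl θh → b ∈ Icc θl θh →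
      IntervalIntegrable g volume a b := by
    intro a b ha hb
    exact (hgc.mono (uIcc_subset_Icc ha hb)).intervalIntegrable
  -- Key: for θ ∈ [θL, θh], ∫_θ^θh g ≤ 0
  have key : ∀ θ ∈ Icc θL θh, (∫ s in θ..θh, g s) ≤ 0 := by
    intro θ hθ
    have hθmem : θ ∈ Icc θl θh := ⟨hθLmem.1.trans hθ.1, hθ.2⟩
    by_contra hpos
    push_neg at hpos
    -- then ω θ < α
    have hωθ : ω θ < α := by
      by_contra hge
      push_neg at hge
      have h0 : 0 ≤ ∫ s in θ..θh, -g s := by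
        apply intervalIntegral.integral_nonneg hθ.2
        intro u hu
        have humem : u ∈ Icc θl θh := ⟨hθmem.1.trans hu.1, hu.2⟩
        have : ω u ≥ α := hge.trans (hωm hθmem humem hu.1)
        have := mul_nonpos_of_nonpos_of_nonneg (show α - ω u ≤ 0 by linarith) (hfpos u humem).le
        simpa [hg] using this
      rw [intervalIntegral.integral_neg] at h0
      linarith
    -- ∫_{θL}^θ g ≥ 0
    have hmid : 0 ≤ ∫ s in θL..θ, g s := by
      apply intervalIntegral.integral_nonneg hθ.1
      intro u hu
      have humem : u ∈ Icc θl θh := ⟨hθLmem.1.trans hu.1, hu.2.trans hθmem.2⟩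
      have : ω u ≤ ω θ := hωm humem hθmem hu.2
      exact mul_nonneg (by linarith) (hfpos u humem).le
    have hadd : (∫ s in θL..θ, g s) + (∫ s in θ..θh, g s) = ∫ s in θL..θh, g s :=
      intervalIntegral.integral_add_adjacent_intervals
        (hgint θL θ hθLmem hθmem) (hgint θ θh hθmem (right_mem_Icc.mpr hlh.le))
    linarith
  -- G is continuous on Icc θl θh
  have hGL0 : (∫ s in θL..θh, g s) = 0 := by
    rcases eq_or_lt_of_le hθLmem.1 with heq | hlt
    · -- θL = θl : total integral is α - E[ω] ≥ 0
      have htot : (∫ s in θl..θh, g s) = α - ∫ s in θl..θh, ω s * f s := by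
        have h1 : IntervalIntegrable (fun s => α * f s) volume θl θh :=
          ((continuousOn_const.mul hfc).mono (by rw [uIcc_of_le hlh.le])).intervalIntegrable
        have h2 : IntervalIntegrable (fun s => ω s * f s) volume θl θh :=
          ((hωc.mul hfc).mono (by rw [uIcc_of_le hlh.le])).intervalIntegrable
        have : (∫ s in θl..θh, g s) = (∫ s in θl..θh, α * f s) - ∫ s in θl..θh, ω s * f s := by
          rw [← intervalIntegral.integral_sub h1 h2]
          congr 1 with s; simp [hg, sub_mul]
        rw [this, intervalIntegral.integral_const_mul, hf1, mul_one]
      rw [heq] at htot hEω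
      linarith [hθLle]
    · -- θL > θl : use continuity and minimality
      by_contra hne
      have hGLneg : (∫ s in θL..θh, g s) < 0 := lt_of_le_of_ne hθLle hne
      -- G θ = total - ∫_{θl}^{θ}
      have hGeq : ∀ θ ∈ Icc θl θh,
          (∫ s in θ..θh, g s) = (∫ s in θl..θh, g s) - ∫ s in θl..θ, g s := by
        intro θ hθ
        have := intervalIntegral.integral_add_adjacent_intervals
          (hgint θl θ (left_mem_Icc.mpr hlh.le) hθ) (hgint θ θh hθ (right_mem_Icc.mpr hlh.le))
        linarith
      have hint' : IntegrableOn g (uIcc θl θh) := by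
        rw [uIcc_of_le hlh.le]
        exact hgc.integrableOn_compact isCompact_Icc
      have hHc : ContinuousOn (fun x => ∫ t in θl..x, g t) (Icc θl θh) := by
        have := intervalIntegral.continuousOn_primitive_interval hint'
        rwa [uIcc_of_le hlh.le] at this
      have hGc : ContinuousOn (fun x => ∫ s in x..θh, g s) (Icc θl θh) := by
        have h2 : ContinuousOn (fun x => (∫ s in θl..θh, g s) - ∫ t in θl..x, g t)
            (Icc θl θh) := continuousOn_const.sub hHc
        exact h2.congr fun x hx => hGeq x hx
      -- eventually negative within Ico θl θL
      have hcw : ContinuousWithinAt (fun x => ∫ s in x..θh, g s) (Ico θl θL) θL :=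
        (hGc θL hθLmem).mono (fun x hx => ⟨hx.1, hx.2.le.trans hθLmem.2⟩)
      have hev : ∀ᶠ x in nhdsWithin θL (Ico θl θL),
          (∫ s in x..θh, g s) < 0 := hcw.eventually_lt continuousWithinAt_const hGLneg
      have hne' : (nhdsWithin θL (Ico θl θL)).NeBot := by
        rw [nhdsWithin_Ico_eq_nhdsLT hlt]
        exact nhdsLT_neBot θL
      obtain ⟨x, hxneg, hxmem⟩ := (hev.and self_mem_nhdsWithin).exists
      have : θL ≤ x := hθLmin ⟨⟨hxmem.1, hxmem.2.le.trans hθLmem.2⟩, hxneg.le⟩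
      exact absurd this (not_le.mpr hxmem.2)
  refine ⟨fun θ hθ => ?_, ?_, ?_⟩
  · have hθmem : θ ∈ Icc θl θh := ⟨hθLmem.1.trans hθ.1, hθ.2⟩
    have hden : 0 < α * f θ := mul_pos hα (hfpos θ hθmem)
    have := key θ hθ
    have : (∫ s in θ..θh, g s) / (α * f θ) ≤ 0 := div_nonpos_of_nonpos_of_nonneg this hden.le
    linarith
  · rw [show (∫ s in θL..θh, (α - ω s) * f s) = 0 from hGL0]; simp
  · simp
end
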